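/- Let A be an arena with recharge weight function w such that every vertex is of exactly one of three types: a recharge-vertex (all incoming edges labelled R), a zero-vertex (all incoming edges have weight 0), or a decrement-vertex (all incoming edges have strictly negative weight). Let Ω color recharge-vertices 2, decrement-vertices 1, and zero-vertices 0, let W be the largest absolute weight, and let cap = (|V|−1)·W. If σ is a positional winning strategy for Player 0 in the parity game (A, Parity(Ω)), then σ is a winning strategy for Player 0 in the recharge game (A, Recharge(w, cap)). -/

import Mathlib

/-- An arena: a directed graph without terminal vertices, a set `V0` of Player 0's
vertices (Player 1 controls the complement), and an initial vertex. -/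
structure Arena (V : Type) where
  V0 : Set V
  E : V → V → Prop
  vI : V
  succ : ∀ v, ∃ v', E v v'

/-- A play: an infinite path starting in the initial vertex. -/
def Arena.Play {V : Type} (A : Arena V) (ρ : ℕ → V) : Prop :=
  ρ 0 = A.vI ∧ ∀ n, A.E (ρ n) (ρ (n + 1))

/-- The play prefix `ρ 0 ⋯ ρ n` as a list. -/
def prefixList {V : Type} (ρ : ℕ → V) (n : ℕ) : List V :=
  (List.range (n + 1)).map ρ

/-- A strategy for the player controlling the vertices in `p`. -/
def Arena.IsStrategy {V : Type} (A : Arena V) (p : Set V) (σ : List V → V) : Prop :=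
  ∀ (h : List V) (v : V), v ∈ p → A.E v (σ (h ++ [v]))

/-- Consistency of a play with a strategy of the player controlling `p`. -/
def Arena.ConsistentWith {V : Type} (A : Arena V) (p : Set V) (σ : List V → V) (ρ : ℕ → V) : Prop :=
  ∀ n, ρ n ∈ p → ρ (n + 1) = σ (prefixList ρ n)

/-- `σ` is a winning strategy for the player controlling `p` with objective `Obj`. -/
def Arena.WinningStrategy {V : Type} (A : Arena V) (p : Set V) (Obj : Set (ℕ → V))
    (σ : List V → V) : Prop :=
  A.IsStrategy p σ ∧ ∀ ρ, A.Play ρ → A.ConsistentWith p σ ρ → ρ ∈ Obj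

/-- Player 0 wins the game `(A, Win)`. -/
def Arena.Player0Wins {V : Type} (A : Arena V) (Win : Set (ℕ → V)) : Prop :=
  ∃ σ, A.WinningStrategy A.V0 Win σ

/-- `h` is a finite play prefix consistent with the strategy `σ` of the player controlling `p`. -/
def Arena.FinPrefix {V : Type} (A : Arena V) (p : Set V) (σ : List V → V) (h : List V) : Prop :=
  ∃ ρ n, A.Play ρ ∧ A.ConsistentWith p σ ρ ∧ h = prefixList ρ n

/-- A positional strategy only depends on the last vertex. -/
def Positional {X : Type} (σ : List X → X) : Prop :=
  ∀ (h : List X) (v : X), σ (h ++ [v]) = σ [v]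

/-- The energy level of the play prefix `ρ 0 ⋯ ρ n` is `EL w ρ n`:
the sum of the weights of its `n` edges. -/
def EL {V : Type} (w : V → V → ℤ) (ρ : ℕ → V) (n : ℕ) : ℤ :=
  ∑ i ∈ Finset.range n, w (ρ i) (ρ (i + 1))

/-- The energy level of a finite play prefix given as a list. -/
def ELl {V : Type} (w : V → V → ℤ) : List V → ℤ
  | [] => 0
  | [_] => 0
  | a :: b :: l => w a b + ELl w (b :: l)

/-- The average accumulated energy of the first `n` prefixes. -/
noncomputable def avgEL {V : Type} (w : V → V → ℤ) (ρ : ℕ → V) (n : ℕ) : ℝ :=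
  (∑ i ∈ Finset.range n, (EL w ρ i : ℝ)) / (n : ℝ)

/-- The lower-bounded energy objective. -/
def EnergyL {V : Type} (w : V → V → ℤ) : Set (ℕ → V) :=
  {ρ | ∀ n, 0 ≤ EL w ρ n}

/-- The lower- and upper-bounded energy objective. -/
def EnergyLU {V : Type} (w : V → V → ℤ) (cap : ℕ) : Set (ℕ → V) :=
  {ρ | ∀ n, 0 ≤ EL w ρ n ∧ EL w ρ n ≤ (cap : ℤ)}

/-- The average-energy objective: limsup of the averages is at most `t`. -/
def AvgE {V : Type} (w : V → V → ℤ) (t : ℝ) : Set (ℕ → V) :=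
  {ρ | Filter.limsup (fun n => (avgEL w ρ n : EReal)) Filter.atTop ≤ (t : EReal)}

/-- The lower-bounded average-energy objective. -/
def AvgEnergyL {V : Type} (w : V → V → ℤ) (t : ℝ) : Set (ℕ → V) :=
  EnergyL w ∩ AvgE w t

/-- The mean-payoff objective. -/
def MP {V : Type} (w : V → V → ℤ) (t : ℝ) : Set (ℕ → V) :=
  {ρ | Filter.limsup (fun n => (((EL w ρ n : ℝ) / (n : ℝ)) : EReal)) Filter.atTop ≤ (t : EReal)}

/-- A memory structure: initial memory state and update along edges. -/
structure Mem (V M : Type) where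
  mI : M
  upd : M → V → V → M

/-- Tracking the memory state along a play. -/
def Mem.track {V M : Type} (mem : Mem V M) (ρ : ℕ → V) : ℕ → M
  | 0 => mem.mI
  | n + 1 => mem.upd (Mem.track mem ρ n) (ρ n) (ρ (n + 1))

def Mem.runAux {V M : Type} (mem : Mem V M) : M → List V → M
  | m, [] => m
  | m, [_] => m
  | m, a :: b :: l => Mem.runAux mem (mem.upd m a b) (b :: l)

/-- `Upd⁺`: the memory state reached along a finite play prefix. -/
def Mem.run {V M : Type} (mem : Mem V M) (h : List V) : M :=
  Mem.runAux mem mem.mI h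

/-- The strategy `σ` is implemented by the memory structure `mem`
(via some next-move function). -/
def Arena.ImplementedBy {V M : Type} (A : Arena V) (mem : Mem V M) (σ : List V → V) : Prop :=
  ∃ nxt : V → M → V, ∀ (h : List V) (v : V), σ (h ++ [v]) = nxt v (mem.run (h ++ [v]))

/-- `σ` is a finite-state strategy of size `k`. -/
def Arena.FiniteStateOfSize {V : Type} (A : Arena V) (k : ℕ) (σ : List V → V) : Prop :=
  ∃ (M : Type) (inst : Fintype M) (mem : Mem V M),
    @Fintype.card M inst = k ∧ A.ImplementedBy mem σ

/-- The expanded arena `A × M`. -/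
def Arena.expand {V M : Type} (A : Arena V) (mem : Mem V M) : Arena (V × M) where
  V0 := {p | p.1 ∈ A.V0}
  E := fun p q => A.E p.1 q.1 ∧ q.2 = mem.upd p.2 p.1 q.1
  vI := (A.vI, mem.mI)
  succ := fun p => by
    obtain ⟨v', h⟩ := A.succ p.1
    exact ⟨(v', mem.upd p.2 p.1 v'), h, rfl⟩

/-- The extended play in `A × M` corresponding to a play in `A`. -/
def extendPlay {V M : Type} (mem : Mem V M) (ρ : ℕ → V) : ℕ → V × M :=
  fun n => (ρ n, Mem.track mem ρ n)

/-- `(A, Win) ≤_M (A × M, Win')`. -/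
def Reduces {V M : Type} (A : Arena V) (mem : Mem V M) (Win : Set (ℕ → V))
    (Win' : Set (ℕ → V × M)) : Prop :=
  ∀ ρ, A.Play ρ → (ρ ∈ Win ↔ extendPlay mem ρ ∈ Win')

/-- A recharge weight function (`none` is the recharge label `R`) assigns
non-positive weights to all (non-recharge) edges. -/
def RechargeWeights {V : Type} (A : Arena V) (w : V → V → Option ℤ) : Prop :=
  ∀ u v, A.E u v → ∀ k : ℤ, w u v = some k → k ≤ 0

/-- The recharge energy level of the prefix `ρ 0 ⋯ ρ n`: the capacity plus the
accumulated weight since the last `R`-edge. -/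
def ELcap {V : Type} (w : V → V → Option ℤ) (cap : ℕ) (ρ : ℕ → V) : ℕ → ℤ
  | 0 => (cap : ℤ)
  | n + 1 =>
    match w (ρ n) (ρ (n + 1)) with
    | none => (cap : ℤ)
    | some k => ELcap w cap ρ n + k

/-- The recharge objective. -/
def Recharge {V : Type} (w : V → V → Option ℤ) (cap : ℕ) : Set (ℕ → V) :=
  {ρ | ∀ n, 0 ≤ ELcap w cap ρ n}

/-- The average of the recharge energy levels of the first `n` prefixes. -/
noncomputable def avgELcap {V : Type} (w : V → V → Option ℤ) (cap : ℕ) (ρ : ℕ → V)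
    (n : ℕ) : ℝ :=
  (∑ i ∈ Finset.range n, (ELcap w cap ρ i : ℝ)) / (n : ℝ)

/-- The average-bounded recharge objective. -/
def AvgRecharge {V : Type} (w : V → V → Option ℤ) (cap : ℕ) (t : ℝ) : Set (ℕ → V) :=
  {ρ | Filter.limsup (fun n => (avgELcap w cap ρ n : EReal)) Filter.atTop ≤ (t : EReal)} ∩
    Recharge w cap

/-- The (max-)parity objective: the maximal color occurring infinitely often is even. -/
def ParityObj {V : Type} (Ω : V → ℕ) : Set (ℕ → V) :=
  {ρ | ∃ c, Even c ∧ {n | Ω (ρ n) = c}.Infinite ∧ ∀ d, {n | Ω (ρ n) = d}.Infinite → d ≤ c}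

/-- Every vertex is of exactly one of three types, and `Ω` colors recharge-vertices
`2`, decrement-vertices `1` and zero-vertices `0`. -/
def ColoredRecharge {V : Type} (A : Arena V) (w : V → V → Option ℤ) (Ω : V → ℕ) : Prop :=
  ∀ v : V,
    (Ω v = 2 ∧ ∀ u, A.E u v → w u v = none) ∨
    (Ω v = 1 ∧ ∀ u, A.E u v → ∃ k : ℤ, w u v = some k ∧ k < 0) ∨
    (Ω v = 0 ∧ ∀ u, A.E u v → w u v = some 0)

/-!
If the recharge energy ever dropped below `0`, then since the last recharge the play would have
entered more than `|V| - 1` decrement-vertices (color `1`) and no recharge-vertex (color `2`).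
By pigeonhole some vertex repeats on this stretch, closing a cycle whose maximal color is `1`.
Since `σ` is positional, the lasso that runs to this cycle and then repeats it forever is again
consistent with `σ`, and it violates the parity objective.
-/

open Finset

section Lasso

variable {V : Type}

theorem prefixList_eq_append (ρ : ℕ → V) (n : ℕ) :
    prefixList ρ n = (List.range n).map ρ ++ [ρ n] := by
  simp [prefixList, List.range_succ]

theorem Arena.consistentWith_iff_of_positional {A : Arena V} {p : Set V} {σ : List V → V}
    (hσ : Positional σ) {ρ : ℕ → V} :
    A.ConsistentWith p σ ρ ↔ ∀ n, ρ n ∈ p → ρ (n + 1) = σ [ρ n] := by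
  simp only [Arena.ConsistentWith, prefixList_eq_append, show ∀ h v, σ (h ++ [v]) = σ [v] from hσ]

theorem Arena.Play.comp {A : Arena V} {ρ : ℕ → V} (hρ : A.Play ρ) {f : ℕ → ℕ} (h0 : f 0 = 0)
    (hf : ∀ n, ρ (f (n + 1)) = ρ (f n + 1)) : A.Play (ρ ∘ f) :=
  ⟨by simp [h0, hρ.1], fun n => by simpa [hf n] using hρ.2 (f n)⟩

theorem Arena.ConsistentWith.comp {A : Arena V} {p : Set V} {σ : List V → V} (hσ : Positional σ)
    {ρ : ℕ → V} (hρ : A.ConsistentWith p σ ρ) {f : ℕ → ℕ}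
    (hf : ∀ n, ρ (f (n + 1)) = ρ (f n + 1)) : A.ConsistentWith p σ (ρ ∘ f) := by
  rw [Arena.consistentWith_iff_of_positional hσ] at hρ ⊢
  intro n hn
  simpa [hf n] using hρ (f n) hn

/-- The position of `ρ` shown at time `n` by the lasso that follows `ρ` up to position `i` and
then repeats `ρ i ⋯ ρ (i + ℓ - 1)` forever. -/
def lassoIndex (i ℓ n : ℕ) : ℕ :=
  if n < i then n else i + (n - i) % ℓ

theorem lassoIndex_zero (i ℓ : ℕ) : lassoIndex i ℓ 0 = 0 := by
  unfold lassoIndex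
  split_ifs with h
  · rfl
  · simp [Nat.eq_zero_of_not_pos h]

theorem lassoIndex_mem_Ico {i ℓ n : ℕ} (hℓ : 0 < ℓ) (hn : i ≤ n) :
    lassoIndex i ℓ n ∈ Ico i (i + ℓ) := by
  have := Nat.mod_lt (n - i) hℓ
  simp only [lassoIndex, if_neg (not_lt.2 hn), mem_Ico]
  omega

theorem lassoIndex_add_mul {i ℓ m : ℕ} (hm : m ∈ Ico i (i + ℓ)) (k : ℕ) :
    lassoIndex i ℓ (m + k * ℓ) = m := by
  rw [mem_Ico] at hm
  have : (m + k * ℓ - i) % ℓ = m - i := by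
    rw [show m + k * ℓ - i = m - i + k * ℓ by omega, Nat.add_mul_mod_self_right,
      Nat.mod_eq_of_lt (by omega)]
  simp only [lassoIndex, if_neg (show ¬m + k * ℓ < i by omega), this]
  omega

theorem infinite_setOf_lassoIndex_eq {i ℓ m : ℕ} (hℓ : 0 < ℓ) (hm : m ∈ Ico i (i + ℓ)) :
    {n | lassoIndex i ℓ n = m}.Infinite :=
  Set.infinite_of_injective_forall_mem (f := fun k => m + k * ℓ)
    (fun a b hab => Nat.eq_of_mul_eq_mul_right hℓ (by simpa using hab))
    (fun k => lassoIndex_add_mul hm k)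

theorem lassoIndex_succ {ρ : ℕ → V} {i ℓ : ℕ} (hℓ : 0 < ℓ) (hcyc : ρ i = ρ (i + ℓ)) (n : ℕ) :
    ρ (lassoIndex i ℓ (n + 1)) = ρ (lassoIndex i ℓ n + 1) := by
  unfold lassoIndex
  by_cases hn : n < i
  · by_cases hn' : n + 1 < i
    · simp [hn, hn']
    · simp only [if_pos hn, if_neg hn', show n + 1 - i = 0 by omega, Nat.zero_mod]
      congr 1; omega
  have hq := Nat.mod_lt (n - i) hℓ
  rw [if_neg hn, if_neg (show ¬n + 1 < i by omega), show n + 1 - i = n - i + 1 by omega,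
    ← Nat.mod_add_mod]
  rcases (show (n - i) % ℓ + 1 ≤ ℓ by omega).lt_or_eq with hlt | heq
  · rw [Nat.mod_eq_of_lt hlt, add_assoc]
  · -- the lasso closes: it jumps back from `ρ (i + ℓ - 1)` to `ρ i = ρ (i + ℓ)`
    rw [heq, Nat.mod_self, add_zero, hcyc, add_assoc, heq]

theorem exists_mem_Ico_iff_exists_mem_Ioc {ρ : ℕ → V} {i ℓ : ℕ}
    (hcyc : ρ i = ρ (i + ℓ)) {P : V → Prop} :
    (∃ m ∈ Ico i (i + ℓ), P (ρ m)) ↔ ∃ m ∈ Ioc i (i + ℓ), P (ρ m) := by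
  constructor
  · rintro ⟨m, hm, hP⟩
    rw [mem_Ico] at hm
    rcases hm.1.lt_or_eq with hlt | rfl
    · exact ⟨m, mem_Ioc.2 ⟨hlt, hm.2.le⟩, hP⟩
    · exact ⟨i + ℓ, mem_Ioc.2 ⟨by omega, le_rfl⟩, hcyc ▸ hP⟩
  · rintro ⟨m, hm, hP⟩
    rw [mem_Ioc] at hm
    rcases hm.2.lt_or_eq with hlt | rfl
    · exact ⟨m, mem_Ico.2 ⟨hm.1.le, hlt⟩, hP⟩
    · exact ⟨i, mem_Ico.2 ⟨le_rfl, by omega⟩, hcyc ▸ hP⟩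

theorem Arena.WinningStrategy.not_odd_cycle {A : Arena V} {Ω : V → ℕ} {σ : List V → V}
    (hwin : A.WinningStrategy A.V0 (ParityObj Ω) σ) (hσ : Positional σ) {ρ : ℕ → V}
    (hplay : A.Play ρ) (hcons : A.ConsistentWith A.V0 σ ρ) {i ℓ d : ℕ} (hℓ : 0 < ℓ)
    (hcyc : ρ i = ρ (i + ℓ)) (hd : Odd d) (hle : ∀ m ∈ Ioc i (i + ℓ), Ω (ρ m) ≤ d)
    (hmem : ∃ m ∈ Ioc i (i + ℓ), Ω (ρ m) = d) : False := by
  obtain ⟨c, hc, hc_inf, hc_max⟩ :=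
    hwin.2 _ (hplay.comp (lassoIndex_zero i ℓ) (lassoIndex_succ hℓ hcyc))
      (hcons.comp hσ (lassoIndex_succ hℓ hcyc))
  have hcd : c ≤ d := by
    obtain ⟨n, hn, hin⟩ := hc_inf.exists_gt i
    obtain ⟨m, hm, rfl⟩ := (exists_mem_Ico_iff_exists_mem_Ioc hcyc (P := (Ω · = c))).1
      ⟨_, lassoIndex_mem_Ico hℓ hin.le, hn⟩
    exact hle m hm
  have hdc : d ≤ c := by
    obtain ⟨m, hm, hΩ⟩ := (exists_mem_Ico_iff_exists_mem_Ioc hcyc (P := (Ω · = d))).2 hmem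
    exact hc_max d <| (infinite_setOf_lassoIndex_eq hℓ hm).mono
      fun n (hn : lassoIndex i ℓ n = m) => by simp [hn, hΩ]
  exact Nat.not_even_iff_odd.2 hd (le_antisymm hcd hdc ▸ hc)

end Lasso

section Recharge

variable {V : Type}

theorem exists_last_recharge (w : V → V → Option ℤ) (cap : ℕ) (ρ : ℕ → V) (n : ℕ) :
    ∃ r ≤ n, ELcap w cap ρ r = cap ∧ ∀ t ∈ Ico r n, w (ρ t) (ρ (t + 1)) ≠ none := by
  induction n with
  | zero => exact ⟨0, le_rfl, rfl, by simp⟩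
  | succ n ih =>
    cases hw : w (ρ n) (ρ (n + 1)) with
    | none => exact ⟨n + 1, le_rfl, by simp [ELcap, hw], by simp⟩
    | some k =>
      obtain ⟨r, hrn, hr, hnone⟩ := ih
      refine ⟨r, hrn.trans n.le_succ, hr, fun t ht => ?_⟩
      rw [mem_Ico] at ht
      rcases (Nat.lt_succ_iff.1 ht.2).lt_or_eq with hlt | rfl
      · exact hnone t (mem_Ico.2 ⟨ht.1, hlt⟩)
      · simp [hw]

theorem ColoredRecharge.color_le_one {A : Arena V} {w : V → V → Option ℤ} {Ω : V → ℕ}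
    (hc : ColoredRecharge A w Ω) {ρ : ℕ → V} (hplay : A.Play ρ) {r n : ℕ}
    (hnone : ∀ t ∈ Ico r n, w (ρ t) (ρ (t + 1)) ≠ none) : ∀ m ∈ Ioc r n, Ω (ρ m) ≤ 1 := by
  intro m hm
  obtain ⟨t, rfl⟩ : ∃ t, m = t + 1 := ⟨m - 1, by have := (mem_Ioc.1 hm).1; omega⟩
  have hw := hnone t (by simp only [mem_Ioc, mem_Ico] at hm ⊢; omega)
  rcases hc (ρ (t + 1)) with ⟨-, hR⟩ | ⟨h1, -⟩ | ⟨h0, -⟩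
  · exact absurd (hR _ (hplay.2 t)) hw
  · exact h1.le
  · omega

theorem ColoredRecharge.sub_mul_le_ELcap {A : Arena V} {w : V → V → Option ℤ} {Ω : V → ℕ}
    (hc : ColoredRecharge A w Ω) {W : ℕ}
    (hW : ∀ u v, A.E u v → ∀ k : ℤ, w u v = some k → -(W : ℤ) ≤ k)
    {cap : ℕ} {ρ : ℕ → V} (hplay : A.Play ρ) {r n : ℕ} (hrn : r ≤ n)
    (hr : ELcap w cap ρ r = cap) (hnone : ∀ t ∈ Ico r n, w (ρ t) (ρ (t + 1)) ≠ none) :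
    (cap : ℤ) - #{t ∈ Ioc r n | Ω (ρ t) = 1} * W ≤ ELcap w cap ρ n := by
  induction n, hrn using Nat.le_induction with
  | base => simp [hr]
  | succ n hrn ih =>
    have ih := ih fun t ht => hnone t (by simp only [mem_Ico] at ht ⊢; omega)
    obtain ⟨k, hk⟩ := Option.ne_none_iff_exists'.1 (hnone n (mem_Ico.2 ⟨hrn, n.lt_succ_self⟩))
    have hedge := hplay.2 n
    have hEL : ELcap w cap ρ (n + 1) = ELcap w cap ρ n + k := by simp [ELcap, hk]
    have hIoc : Ioc r (n + 1) = insert (n + 1) (Ioc r n) := by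
      ext x; simp only [mem_Ioc, mem_insert]; omega
    have hnotmem : n + 1 ∉ Ioc r n := by simp
    rcases hc (ρ (n + 1)) with ⟨-, hR⟩ | ⟨h1, -⟩ | ⟨h0, hzero⟩
    · simp [hR _ hedge] at hk
    · rw [hEL, hIoc, filter_insert, if_pos h1, card_insert_of_notMem (by simp [hnotmem])]
      push_cast
      linarith [hW _ _ hedge k hk]
    · obtain rfl : k = 0 := Option.some_inj.1 (hk ▸ hzero _ hedge)
      rw [hEL, hIoc, filter_insert, if_neg (by omega)]
      linarith

end Recharge

theorem exists_lt_eq_of_card_le {V : Type} [Fintype V] (ρ : ℕ → V) {r : ℕ} {D : Finset ℕ}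
    (hD : ∀ b ∈ D, r < b) (hcard : Fintype.card V ≤ #D) :
    ∃ a b, r ≤ a ∧ a < b ∧ b ∈ D ∧ ρ a = ρ b := by
  have hr : r ∉ D := fun h => lt_irrefl r (hD r h)
  obtain ⟨x, hx, y, hy, hxy, hρ⟩ := exists_ne_map_eq_of_card_lt_of_maps_to (t := univ)
    (by rw [card_insert_of_notMem hr, card_univ]; omega) (fun a _ => mem_univ (ρ a))
  have hge : ∀ a ∈ insert r D, r ≤ a := by
    simp only [mem_insert, forall_eq_or_imp, le_rfl, true_and]
    exact fun a ha => (hD a ha).le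
  have hmem : ∀ a ∈ insert r D, ∀ b ∈ insert r D, a < b → b ∈ D := by
    intro a ha b hb hab
    rcases mem_insert.1 hb with rfl | hb
    · exact absurd (hge a ha) (not_le.2 hab)
    · exact hb
  rcases hxy.lt_or_gt with h | h
  · exact ⟨x, y, hge x hx, h, hmem x hx y hy h, hρ⟩
  · exact ⟨y, x, hge y hy, h, hmem y hy x hx h, hρ.symm⟩

/-- A positional winning strategy for Player 0 in the three-color
parity game is a winning strategy for the recharge game with capacity
`(|V| - 1) · W`. -/
theorem parity_positional_to_recharge {V : Type} [Fintype V] (A : Arena V)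
    (w : V → V → Option ℤ) (Ω : V → ℕ) (W : ℕ)
    (hc : ColoredRecharge A w Ω)
    (hW : ∀ u v, A.E u v → ∀ k : ℤ, w u v = some k → -(W : ℤ) ≤ k)
    (σ : List V → V) (hpos : Positional σ)
    (hwin : A.WinningStrategy A.V0 (ParityObj Ω) σ) :
    A.WinningStrategy A.V0 (Recharge w ((Fintype.card V - 1) * W)) σ := by
  refine ⟨hwin.1, fun ρ hplay hcons n => ?_⟩
  by_contra! hneg
  obtain ⟨r, hrn, hr, hnone⟩ := exists_last_recharge w ((Fintype.card V - 1) * W) ρ n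
  set D := {t ∈ Ioc r n | Ω (ρ t) = 1}
  have hlow := hc.sub_mul_le_ELcap hW hplay hrn hr hnone
  have hcard : Fintype.card V ≤ #D := by
    have hlt : (Fintype.card V - 1) * W < #D * W := by
      exact_mod_cast (show (((Fintype.card V - 1) * W : ℕ) : ℤ) < #D * W by linarith)
    have := Nat.lt_of_mul_lt_mul_right hlt
    omega
  have hcol := hc.color_le_one hplay hnone
  obtain ⟨a, b, hra, hab, hbD, hρab⟩ :=
    exists_lt_eq_of_card_le ρ (D := D) (fun b hb => (mem_Ioc.1 (mem_filter.1 hb).1).1) hcard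
  obtain ⟨hb, hb1⟩ := mem_filter.1 hbD
  rw [mem_Ioc] at hb
  rw [← Nat.add_sub_cancel' hab.le] at hρab
  refine hwin.not_odd_cycle hpos hplay hcons (by omega) hρab odd_one
    (fun m hm => hcol m ?_) ⟨b, by simp only [mem_Ioc]; omega, hb1⟩
  simp only [mem_Ioc] at hm ⊢
  omega
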